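/- arXiv:0912.0841 — 2 statements merged into one kernel-verified Lean document; each statement's English description precedes it below -/
import Mathlib

section
/- Let Ω ⊆ ℂⁿ be open, let φ : Ω → ℝ be of class C², let ε > 0, and let f ∈ C_c^∞(Ω). Then ∫_Ω ( |∇φ|² − (1+ε) Δφ ) |f|² e^{−φ} dλ ≤ (2 + ε + 1/ε) Σ_{l=1}^{2n} ∫_Ω |∂_l f|² e^{−φ} dλ. -/
open MeasureTheory Complex Metric Filter
noncomputable section

/-- `ℂⁿ` with its Euclidean inner product and norm. -/
abbrev Cn (n : ℕ) := EuclideanSpace ℂ (Fin n)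

instance {n : ℕ} : MeasurableSpace (Cn n) := MeasurableSpace.comap (WithLp.ofLp (p := 2)) MeasurableSpace.pi

/-- Lebesgue measure on `ℂⁿ ≅ ℝ^{2n}`. -/
instance {n : ℕ} : MeasureSpace (Cn n) := ⟨MeasureTheory.Measure.map (WithLp.toLp 2) (MeasureTheory.Measure.pi fun _ => volume)⟩

/-- The real coordinate direction indexed by `(j, b)`: the `x_j`-direction if `b = false`,
the `y_j`-direction if `b = true`. -/
def dir {n : ℕ} (l : Fin n × Bool) : Cn n :=
  EuclideanSpace.single l.1 (if l.2 then Complex.I else 1)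

/-- The real partial derivative `∂_l`, `l` ranging over the `2n` real coordinate
directions of `ℂⁿ`. -/
def pd {n : ℕ} {F : Type} [NormedAddCommGroup F] [NormedSpace ℝ F]
    (l : Fin n × Bool) (f : Cn n → F) (z : Cn n) : F :=
  fderiv ℝ f z (dir l)

/-- The real Laplacian `Δφ = Σ_l ∂_l ∂_l φ`. -/
def lap {n : ℕ} (φ : Cn n → ℝ) (z : Cn n) : ℝ :=
  ∑ l : Fin n × Bool, pd l (pd l φ) z

/-- `|∇φ|²`, the squared norm of the real gradient. -/
def gradSq {n : ℕ} (φ : Cn n → ℝ) (z : Cn n) : ℝ :=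
  ∑ l : Fin n × Bool, (pd l φ z)^2

/-- The Levi form `L_u(z;t) = ¼(D²u(z)(t,t) + D²u(z)(it,it))`. -/
def levi {n : ℕ} (u : Cn n → ℝ) (z t : Cn n) : ℝ :=
  (1/4) * (fderiv ℝ (fun w => fderiv ℝ u w t) z t
    + fderiv ℝ (fun w => fderiv ℝ u w (Complex.I • t)) z (Complex.I • t))

/-- The Wirtinger derivative `∂g/∂z_j = ½(∂g/∂x_j − i ∂g/∂y_j)` of a complex-valued function. -/
def wz {n : ℕ} (j : Fin n) (g : Cn n → ℂ) (z : Cn n) : ℂ :=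
  (1/2) * (pd (j, false) g z - Complex.I * pd (j, true) g z)

/-- The Wirtinger derivative `∂g/∂z̄_j = ½(∂g/∂x_j + i ∂g/∂y_j)` of a complex-valued function. -/
def wzbar {n : ℕ} (j : Fin n) (g : Cn n → ℂ) (z : Cn n) : ℂ :=
  (1/2) * (pd (j, false) g z + Complex.I * pd (j, true) g z)

/-- The Wirtinger derivative `∂φ/∂z_j` of a real-valued function. -/
def wzR {n : ℕ} (j : Fin n) (φ : Cn n → ℝ) (z : Cn n) : ℂ :=
  (1/2) * (Complex.ofReal (pd (j, false) φ z) - Complex.I * Complex.ofReal (pd (j, true) φ z))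

/-- The Wirtinger derivative `∂φ/∂z̄_j` of a real-valued function. -/
def wzbarR {n : ℕ} (j : Fin n) (φ : Cn n → ℝ) (z : Cn n) : ℂ :=
  (1/2) * (Complex.ofReal (pd (j, false) φ z) + Complex.I * Complex.ofReal (pd (j, true) φ z))

/-- The complex Hessian coefficient `∂²φ/∂z_j∂z̄_k`. -/
def hess {n : ℕ} (φ : Cn n → ℝ) (j k : Fin n) (z : Cn n) : ℂ :=
  wz j (fun w => wzbarR k φ w) z

/-- `∂̄*_φ f = −Σ_j (∂f_j/∂z_j − (∂φ/∂z_j) f_j)` for a `(0,1)`-form `f = (f_1,…,f_n)`. -/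
def dbarStar {n : ℕ} (φ : Cn n → ℝ) (f : Fin n → Cn n → ℂ) (z : Cn n) : ℂ :=
  -∑ j, (wz j (f j) z - wzR j φ z * f j z)

/-- `f ∈ C_c^∞(Ω)`: smooth, compactly supported, with support inside `Ω`. -/
def SmoothCompSupp {n : ℕ} (Ω : Set (Cn n)) (f : Cn n → ℂ) : Prop :=
  ContDiff ℝ (⊤ : ℕ∞) f ∧ HasCompactSupport f ∧ tsupport f ⊆ Ω

/-! Work one real direction `v` at a time. Since `∂_vφ · e^{−φ} · |f|²` has compact support
in `Ω`, its `∂_v`-derivative integrates to zero, i.e.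
`∫ ∂_v²φ |f|² e^{−φ} = ∫ (∂_vφ)² |f|² e^{−φ} − ∫ ∂_vφ ∂_v|f|² e^{−φ}`,
so the left-hand side becomes `∫ ((1+ε) ∂_vφ ∂_v|f|² − ε (∂_vφ)² |f|²) e^{−φ}`.
Since `|∂_v|f|²| ≤ 2|f||∂_v f|`, AM-GM bounds this integrand pointwise by
`(1+ε)²/ε · |∂_v f|² e^{−φ}`, and `(1+ε)²/ε = 2 + ε + 1/ε`. Summing over the `2n` directions
gives the theorem. -/

open scoped InnerProductSpace

instance {n : ℕ} : BorelSpace (Cn n) := inferInstanceAs (BorelSpace (PiLp 2 fun _ : Fin n => ℂ))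

instance {n : ℕ} : (volume : Measure (Cn n)).IsAddHaarMeasure :=
  (PiLp.continuousLinearEquiv 2 ℝ (fun _ : Fin n => ℂ)).symm.isAddHaarMeasure_map
    (Measure.pi fun _ => volume)

theorem mul_sub_mul_sq_le_of_abs_le {ε a d x y : ℝ} (hε : 0 < ε) (hd : |d| ≤ 2 * x * y) :
    (1 + ε) * a * d - ε * a ^ 2 * x ^ 2 ≤ (2 + ε + 1 / ε) * y ^ 2 := by
  have had : a * d ≤ 2 * |a| * x * y :=
    calc a * d ≤ |a| * |d| := abs_mul a d ▸ le_abs_self _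
      _ ≤ |a| * (2 * x * y) := by gcongr
      _ = 2 * |a| * x * y := by ring
  rw [show 2 + ε + 1 / ε = (1 + ε) ^ 2 / ε by field_simp; ring, div_mul_eq_mul_div,
    le_div_iff₀ hε, ← sq_abs a]
  nlinarith [sq_nonneg (ε * |a| * x - (1 + ε) * y),
    mul_le_mul_of_nonneg_left had (by positivity : (0 : ℝ) ≤ ε * (1 + ε))]

theorem integrable_of_continuousOn_of_eq_zero_off {X G : Type*} [TopologicalSpace X] [T2Space X]
    [MeasurableSpace X] [OpensMeasurableSpace X] {μ : Measure X} [IsFiniteMeasureOnCompacts μ]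
    [NormedAddCommGroup G] {Ω K : Set X} (hΩ : IsOpen Ω) (hK : IsCompact K) (hKΩ : K ⊆ Ω)
    {g : X → G} (hg : ContinuousOn g Ω) (h0 : ∀ z ∉ K, g z = 0) : Integrable g μ :=
  (hg.continuous_of_tsupport_subset hΩ
      ((closure_minimal (Function.support_subset_iff'.2 h0) hK.isClosed).trans hKΩ)
    ).integrable_of_hasCompactSupport (HasCompactSupport.intro hK h0)

section Calculus

variable {E : Type*} [NormedAddCommGroup E] [NormedSpace ℝ E]

theorem ContDiffOn.continuousOn_fderiv_apply {F : Type*} [NormedAddCommGroup F]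
    [NormedSpace ℝ F] {g : E → F} {Ω : Set E} (hg : ContDiffOn ℝ 1 g Ω) (hΩ : IsOpen Ω) (v : E) :
    ContinuousOn (fun z => fderiv ℝ g z v) Ω :=
  (hg.continuousOn_fderiv_of_isOpen hΩ le_rfl).clm_apply continuousOn_const

theorem fderiv_norm_sq_apply_eq_inner {F : Type*} [NormedAddCommGroup F] [InnerProductSpace ℝ F]
    {f : E → F} {z : E} (hf : DifferentiableAt ℝ f z) (v : E) :
    fderiv ℝ (fun y => ‖f y‖ ^ 2) z v = 2 * ⟪f z, fderiv ℝ f z v⟫_ℝ := by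
  rw [hf.hasFDerivAt.norm_sq.fderiv]
  simp

theorem fderiv_mul_exp_neg_apply {a φ : E → ℝ} {z : E} (ha : DifferentiableAt ℝ a z)
    (hφ : DifferentiableAt ℝ φ z) (v : E) :
    fderiv ℝ (fun y => a y * Real.exp (-φ y)) z v
      = (fderiv ℝ a z v - a z * fderiv ℝ φ z v) * Real.exp (-φ z) := by
  rw [(ha.hasFDerivAt.fun_mul hφ.hasFDerivAt.fun_neg.exp).fderiv]
  simp only [smul_neg, add_apply, neg_apply, smul_apply, smul_eq_mul]
  ring

theorem sq_fderiv_sub_second_fderiv_add_fderiv_mul_le {F : Type*} [NormedAddCommGroup F]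
    [InnerProductSpace ℝ F] {ε : ℝ} (hε : 0 < ε) {φ : E → ℝ} {f : E → F} {z v : E}
    (hφ : DifferentiableAt ℝ φ z) (ha : DifferentiableAt ℝ (fun w => fderiv ℝ φ w v) z)
    (hf : DifferentiableAt ℝ f z) :
    ((fderiv ℝ φ z v) ^ 2 - (1 + ε) * fderiv ℝ (fun w => fderiv ℝ φ w v) z v)
          * ‖f z‖ ^ 2 * Real.exp (-φ z)
        + (1 + ε) * (fderiv ℝ (fun w => fderiv ℝ φ w v * Real.exp (-φ w)) z v * ‖f z‖ ^ 2
          + fderiv ℝ φ z v * Real.exp (-φ z) * fderiv ℝ (fun w => ‖f w‖ ^ 2) z v)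
      ≤ (2 + ε + 1 / ε) * (‖fderiv ℝ f z v‖ ^ 2 * Real.exp (-φ z)) := by
  have hdh : |fderiv ℝ (fun w => ‖f w‖ ^ 2) z v| ≤ 2 * ‖f z‖ * ‖fderiv ℝ f z v‖ := by
    rw [fderiv_norm_sq_apply_eq_inner hf, abs_mul, abs_two, mul_assoc]
    gcongr
    exact abs_real_inner_le_norm _ _
  have hAMGM := mul_sub_mul_sq_le_of_abs_le (a := fderiv ℝ φ z v) hε hdh
  have hexp := Real.exp_pos (-φ z)
  rw [fderiv_mul_exp_neg_apply ha hφ]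
  nlinarith

theorem integrable_sq_fderiv_sub_second_fderiv_mul_norm_sq [MeasurableSpace E]
    [OpensMeasurableSpace E] {μ : Measure E} [IsFiniteMeasureOnCompacts μ] {F : Type*}
    [NormedAddCommGroup F] {Ω : Set E} (hΩ : IsOpen Ω) {φ : E → ℝ} (hφ : ContDiffOn ℝ 2 φ Ω)
    (c : ℝ) {f : E → F} (hf : Continuous f) (hfc : HasCompactSupport f) (hfΩ : tsupport f ⊆ Ω)
    (v : E) :
    Integrable (fun z => ((fderiv ℝ φ z v) ^ 2 - c * fderiv ℝ (fun w => fderiv ℝ φ w v) z v)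
      * ‖f z‖ ^ 2 * Real.exp (-φ z)) μ := by
  have ha : ContDiffOn ℝ 1 (fun z => fderiv ℝ φ z v) Ω :=
    (hφ.fderiv_of_isOpen hΩ le_rfl).clm_apply contDiffOn_const
  refine integrable_of_continuousOn_of_eq_zero_off hΩ hfc hfΩ ?_ fun z hz => by
    simp [image_eq_zero_of_notMem_tsupport hz]
  exact ((ha.continuousOn.pow 2).sub ((ha.continuousOn_fderiv_apply hΩ v).const_smul c)).mul
    (hf.norm.pow 2).continuousOn |>.mul hφ.continuousOn.neg.rexp

end Calculus

section HaarMeasure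

variable {E : Type*} [NormedAddCommGroup E] [NormedSpace ℝ E] [FiniteDimensional ℝ E]
  [MeasurableSpace E] [BorelSpace E] {μ : Measure E} [μ.IsAddHaarMeasure]

theorem setIntegral_fderiv_mul_add_mul_fderiv_eq_zero {Ω : Set E} (hΩ : IsOpen Ω)
    {ψ h : E → ℝ} (hψ : ContDiffOn ℝ 1 ψ Ω) (hh : ContDiff ℝ 1 h) (hhc : HasCompactSupport h)
    (hhΩ : tsupport h ⊆ Ω) (v : E) :
    ∫ z in Ω, (fderiv ℝ ψ z v * h z + ψ z * fderiv ℝ h z v) ∂μ = 0 := by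
  have h0 : ∀ z ∉ tsupport h, h z = 0 := fun z hz => image_eq_zero_of_notMem_tsupport hz
  have h0' : ∀ z ∉ tsupport h, fderiv ℝ h z v = 0 := fun z hz => by
    rw [fderiv_of_notMem_tsupport ℝ hz, zero_apply]
  have hψd : ∀ z ∈ tsupport h, DifferentiableAt ℝ ψ z := fun z hz =>
    (hψ.contDiffAt (hΩ.mem_nhds (hhΩ hz))).differentiableAt one_ne_zero
  have hint : Integrable (fun z => ψ z * h z) μ :=
    integrable_of_continuousOn_of_eq_zero_off hΩ hhc hhΩ
      (hψ.continuousOn.mul hh.continuous.continuousOn) fun z hz => by rw [h0 z hz, mul_zero]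
  have hint₁ : Integrable (fun z => fderiv ℝ ψ z v * h z) μ :=
    integrable_of_continuousOn_of_eq_zero_off hΩ hhc hhΩ
      ((hψ.continuousOn_fderiv_apply hΩ v).mul hh.continuous.continuousOn)
      fun z hz => by rw [h0 z hz, mul_zero]
  have hint₂ : Integrable (fun z => ψ z * fderiv ℝ h z v) μ :=
    integrable_of_continuousOn_of_eq_zero_off hΩ hhc hhΩ
      (hψ.continuousOn.mul
        ((hh.continuous_fderiv one_ne_zero).clm_apply continuous_const).continuousOn)
      fun z hz => by rw [h0' z hz, mul_zero]
  rw [setIntegral_eq_integral_of_forall_compl_eq_zero fun z hz => by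
      rw [h0 z (hz ∘ (hhΩ ·)), h0' z (hz ∘ (hhΩ ·))]; ring,
    integral_add hint₁ hint₂, integral_mul_fderiv_eq_neg_fderiv_mul_of_integrable hint₁ hint₂ hint
      hψd fun z _ => hh.differentiable one_ne_zero z, add_neg_cancel]

theorem setIntegral_sq_fderiv_sub_second_fderiv_mul_norm_sq_le {F : Type*}
    [NormedAddCommGroup F] [InnerProductSpace ℝ F] {Ω : Set E} (hΩ : IsOpen Ω)
    {φ : E → ℝ} (hφ : ContDiffOn ℝ 2 φ Ω) {ε : ℝ} (hε : 0 < ε) {f : E → F}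
    (hf : ContDiff ℝ 1 f) (hfc : HasCompactSupport f) (hfΩ : tsupport f ⊆ Ω) (v : E) :
    ∫ z in Ω, ((fderiv ℝ φ z v) ^ 2 - (1 + ε) * fderiv ℝ (fun w => fderiv ℝ φ w v) z v)
        * ‖f z‖ ^ 2 * Real.exp (-φ z) ∂μ
      ≤ (2 + ε + 1 / ε) * ∫ z in Ω, ‖fderiv ℝ f z v‖ ^ 2 * Real.exp (-φ z) ∂μ := by
  set a : E → ℝ := fun z => fderiv ℝ φ z v
  set ψ : E → ℝ := fun z => a z * Real.exp (-φ z)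
  set h : E → ℝ := fun z => ‖f z‖ ^ 2
  have ha : ContDiffOn ℝ 1 a Ω := (hφ.fderiv_of_isOpen hΩ le_rfl).clm_apply contDiffOn_const
  have hψ : ContDiffOn ℝ 1 ψ Ω := ha.mul (hφ.of_le one_le_two).neg.exp
  have hh : ContDiff ℝ 1 h := hf.norm_sq ℝ
  have hR : ∫ z in Ω, (fderiv ℝ ψ z v * h z + ψ z * fderiv ℝ h z v) ∂μ = 0 :=
    setIntegral_fderiv_mul_add_mul_fderiv_eq_zero hΩ hψ hh
      (hfc.comp_left (g := fun y : F => ‖y‖ ^ 2) (by simp))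
      ((tsupport_comp_subset (g := fun y : F => ‖y‖ ^ 2) (by simp) f).trans hfΩ) v
  have hint_I := integrable_sq_fderiv_sub_second_fderiv_mul_norm_sq (μ := μ) hΩ hφ (1 + ε)
    hf.continuous hfc hfΩ v
  have hint_R : Integrable (fun z => fderiv ℝ ψ z v * h z + ψ z * fderiv ℝ h z v) μ := by
    refine integrable_of_continuousOn_of_eq_zero_off hΩ hfc hfΩ ?_ fun z hz => ?_
    · exact ((hψ.continuousOn_fderiv_apply hΩ v).mul hh.continuous.continuousOn).add
        (hψ.continuousOn.mul
          ((hh.continuous_fderiv one_ne_zero).clm_apply continuous_const).continuousOn)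
    · rw [fderiv_norm_sq_apply_eq_inner (hf.differentiable one_ne_zero z)]
      simp [h, image_eq_zero_of_notMem_tsupport hz]
  have hint_df : Integrable (fun z => ‖fderiv ℝ f z v‖ ^ 2 * Real.exp (-φ z)) μ := by
    refine integrable_of_continuousOn_of_eq_zero_off hΩ hfc hfΩ ?_ fun z hz => ?_
    · exact (((hf.continuous_fderiv one_ne_zero).clm_apply continuous_const).norm.pow 2
        ).continuousOn.mul hφ.continuousOn.neg.rexp
    · simp [fderiv_of_notMem_tsupport ℝ hz]
  calc ∫ z in Ω, ((a z) ^ 2 - (1 + ε) * fderiv ℝ a z v) * h z * Real.exp (-φ z) ∂μ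
      = ∫ z in Ω, (((a z) ^ 2 - (1 + ε) * fderiv ℝ a z v) * h z * Real.exp (-φ z)
          + (1 + ε) * (fderiv ℝ ψ z v * h z + ψ z * fderiv ℝ h z v)) ∂μ := by
        rw [integral_add hint_I.integrableOn (hint_R.integrableOn.const_mul _),
          integral_const_mul, hR, mul_zero, add_zero]
    _ ≤ ∫ z in Ω, (2 + ε + 1 / ε) * (‖fderiv ℝ f z v‖ ^ 2 * Real.exp (-φ z)) ∂μ :=
        setIntegral_mono_on (hint_I.integrableOn.add (hint_R.integrableOn.const_mul _))
          (hint_df.integrableOn.const_mul _) hΩ.measurableSet fun z hz =>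
            sq_fderiv_sub_second_fderiv_add_fderiv_mul_le hε
              ((hφ.contDiffAt (hΩ.mem_nhds hz)).differentiableAt two_ne_zero)
              ((ha.contDiffAt (hΩ.mem_nhds hz)).differentiableAt one_ne_zero)
              (hf.differentiable one_ne_zero z)
    _ = _ := integral_const_mul _ _

end HaarMeasure

/-- `∫ (|∇φ|² − (1+ε)Δφ)|f|² e^{−φ} ≤ (2+ε+1/ε) Σ_l ∫ |∂_l f|² e^{−φ}`. -/
theorem stmt4 {n : ℕ} (Ω : Set (Cn n)) (hΩ : IsOpen Ω)
    (φ : Cn n → ℝ) (hφ : ContDiffOn ℝ 2 φ Ω)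
    (ε : ℝ) (hε : 0 < ε)
    (f : Cn n → ℂ) (hf : SmoothCompSupp Ω f) :
    (∫ z in Ω, (gradSq φ z - (1 + ε) * lap φ z) * ‖f z‖^2 * Real.exp (-φ z))
      ≤ (2 + ε + 1/ε) * ∑ l : Fin n × Bool,
          ∫ z in Ω, ‖pd l f z‖^2 * Real.exp (-φ z) := by
  obtain ⟨hf_smooth, hfc, hfΩ⟩ := hf
  have hf : ContDiff ℝ 1 f := hf_smooth.of_le (by exact_mod_cast le_top)
  calc (∫ z in Ω, (gradSq φ z - (1 + ε) * lap φ z) * ‖f z‖^2 * Real.exp (-φ z))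
      = ∑ l : Fin n × Bool, ∫ z in Ω,
          ((pd l φ z) ^ 2 - (1 + ε) * pd l (pd l φ) z) * ‖f z‖ ^ 2 * Real.exp (-φ z) := by
        rw [← integral_finsetSum]
        · simp only [gradSq, lap, Finset.mul_sum, ← Finset.sum_sub_distrib, Finset.sum_mul]
        · exact fun l _ => (integrable_sq_fderiv_sub_second_fderiv_mul_norm_sq
            hΩ hφ (1 + ε) hf.continuous hfc hfΩ (dir l)).integrableOn
    _ ≤ ∑ l : Fin n × Bool, (2 + ε + 1/ε) * ∫ z in Ω, ‖pd l f z‖^2 * Real.exp (-φ z) :=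
        Finset.sum_le_sum fun l _ =>
          setIntegral_sq_fderiv_sub_second_fderiv_mul_norm_sq_le hΩ hφ hε hf hfc hfΩ (dir l)
    _ = _ := (Finset.mul_sum _ _ _).symm
end
end

section
/- (Kohn–Morrey formula, compactly supported case.) Let Ω ⊆ ℂⁿ be open, let φ : Ω → ℝ be of class C², and let f = (f_1,…,f_n) be a (0,1)-form with smooth compactly supported coefficients on Ω. Then Σ_{j,k=1}^n ∫_Ω (∂²φ/∂z_j∂z̄_k) f_j f̄_k e^{−φ} dλ + Σ_{j,k=1}^n ∫_Ω |∂f_j/∂z̄_k|² e^{−φ} dλ = ‖∂̄f‖²_φ + ‖∂̄*_φ f‖²_φ. -/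
open MeasureTheory Complex Metric Filter
noncomputable section

/-!
Write `δ_j u = ∂u/∂z_j − (∂φ/∂z_j) u = e^φ ∂(e^{−φ} u)/∂z_j` (`twistedWz φ j u`), so that
`∂̄*_φ f = −Σ_j δ_j f_j`. The whole formula rests on the commutation relation
`[δ_j, ∂/∂z̄_k] = ∂²φ/∂z_j∂z̄_k`: pointwise, `δ_j u · conj (δ_k v) e^{−φ}` equals
`∂u/∂z̄_k · conj (∂v/∂z̄_j) e^{−φ} + φ_{jk̄} u v̄ e^{−φ}` plus `∂G/∂z_j − ∂H/∂z̄_k` for two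
compactly supported `C¹` functions `G`, `H`, whose integrals vanish. Summing over `j, k`
computes `‖∂̄*_φ f‖²_φ`. Expanding `‖∂̄f‖²_φ = Σ_{j<k} ‖∂f_k/∂z̄_j − ∂f_j/∂z̄_k‖²_φ` gives
`Σ_{j,k} ‖∂f_j/∂z̄_k‖²_φ` minus the same cross terms
`Σ_{j,k} ∫ ∂f_j/∂z̄_k · conj (∂f_k/∂z̄_j) e^{−φ}`, which therefore cancel in the sum.
-/

open ComplexConjugate

-- The measure of the statement is an additive Haar measure on the Borel space `ℂⁿ`.
instance inst_s7 {n : ℕ} : BorelSpace (Cn n) := PiLp.borelSpace 2 (X := fun _ : Fin n => ℂ)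

instance inst_s7_2 {n : ℕ} : (volume : Measure (Cn n)).IsAddHaarMeasure :=
  (PiLp.continuousLinearEquiv 2 ℝ (fun _ : Fin n => ℂ)).symm.isAddHaarMeasure_map
    (Measure.pi fun _ => volume)

@[fun_prop]
lemma Complex.contDiff_ofReal {m : WithTop ℕ∞} : ContDiff ℝ m Complex.ofReal :=
  ofRealCLM.contDiff

@[fun_prop]
lemma Complex.contDiff_conj {m : WithTop ℕ∞} : ContDiff ℝ m (conj : ℂ → ℂ) :=
  conjCLE.contDiff

lemma tsupport_subset_of_eq_zero_off {X E : Type*} [TopologicalSpace X] [Zero E] {g : X → E}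
    {K : Set X} (hK : IsClosed K) (h0 : ∀ x ∉ K, g x = 0) : tsupport g ⊆ K :=
  closure_minimal (fun x hx => by_contra fun hxK => hx (h0 x hxK)) hK

lemma ContinuousOn.integrableOn_of_eq_zero_off {X E : Type*} [TopologicalSpace X] [T2Space X]
    [MeasurableSpace X] [OpensMeasurableSpace X] {μ : Measure X} [IsFiniteMeasureOnCompacts μ]
    [NormedAddCommGroup E] {g : X → E} {s K : Set X} (hg : ContinuousOn g s)
    (hs : MeasurableSet s) (hK : IsCompact K) (hKs : K ⊆ s) (h0 : ∀ x ∉ K, g x = 0) :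
    IntegrableOn g s μ :=
  ((hg.mono hKs).integrableOn_compact hK).of_forall_sdiff_eq_zero hs fun x hx => h0 x hx.2

lemma ContDiffOn.contDiff_of_tsupport_subset {E F : Type*} [NormedAddCommGroup E]
    [NormedSpace ℝ E] [NormedAddCommGroup F] [NormedSpace ℝ F] {g : E → F} {s : Set E}
    {k : WithTop ℕ∞} (hg : ContDiffOn ℝ k g s) (hs : IsOpen s) (hgs : tsupport g ⊆ s) :
    ContDiff ℝ k g := by
  rw [contDiff_iff_contDiffAt]
  intro x
  by_cases hx : x ∈ tsupport g
  · exact hg.contDiffAt (hs.mem_nhds (hgs hx))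
  · exact contDiffAt_const.congr_of_eventuallyEq (notMem_tsupport_iff_eventuallyEq.mp hx)

section WeightedPairing

variable {X : Type*} [MeasurableSpace X] {μ : Measure X}

lemma ofReal_integral_norm_sq_mul (g : X → ℂ) (w : X → ℝ) :
    ((∫ x, ‖g x‖ ^ 2 * w x ∂μ : ℝ) : ℂ) = ∫ x, g x * conj (g x) * w x ∂μ := by
  calc ((∫ x, ‖g x‖ ^ 2 * w x ∂μ : ℝ) : ℂ) = ∫ x, ((‖g x‖ ^ 2 * w x : ℝ) : ℂ) ∂μ :=
        integral_ofReal.symm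
    _ = ∫ x, g x * conj (g x) * w x ∂μ := by
        congr with x
        push_cast
        rw [mul_conj']

lemma integral_sub_mul_conj_sub {g h : X → ℂ} {w : X → ℂ}
    (hgg : Integrable (fun x => g x * conj (g x) * w x) μ)
    (hgh : Integrable (fun x => g x * conj (h x) * w x) μ)
    (hhh : Integrable (fun x => h x * conj (h x) * w x) μ)
    (hhg : Integrable (fun x => h x * conj (g x) * w x) μ) :
    ∫ x, (g x - h x) * conj (g x - h x) * w x ∂μ
      = (∫ x, g x * conj (g x) * w x ∂μ - ∫ x, g x * conj (h x) * w x ∂μ)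
        + (∫ x, h x * conj (h x) * w x ∂μ - ∫ x, h x * conj (g x) * w x ∂μ) := by
  calc ∫ x, (g x - h x) * conj (g x - h x) * w x ∂μ
      = ∫ x, (g x * conj (g x) * w x - g x * conj (h x) * w x)
          + (h x * conj (h x) * w x - h x * conj (g x) * w x) ∂μ := by
        congr with x
        rw [map_sub]
        ring
    _ = _ := by
        rw [integral_add (hgg.sub' hgh) (hhh.sub' hhg), integral_sub hgg hgh,
          integral_sub hhh hhg]

lemma integral_sum_mul_conj_sum {ι : Type*} [Fintype ι] {g : ι → X → ℂ} {w : X → ℂ}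
    (hg : ∀ j k, Integrable (fun x => g j x * conj (g k x) * w x) μ) :
    ∫ x, (∑ j, g j x) * conj (∑ k, g k x) * w x ∂μ
      = ∑ j, ∑ k, ∫ x, g j x * conj (g k x) * w x ∂μ := by
  calc ∫ x, (∑ j, g j x) * conj (∑ k, g k x) * w x ∂μ
      = ∫ x, ∑ j, ∑ k, g j x * conj (g k x) * w x ∂μ := by
        congr with x
        rw [map_sum, Finset.sum_mul_sum, Finset.sum_mul]
        simp only [Finset.sum_mul]
    _ = ∑ j, ∑ k, ∫ x, g j x * conj (g k x) * w x ∂μ := by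
        rw [integral_finsetSum _ fun j _ => integrable_finsetSum _ fun k _ => hg j k]
        exact Finset.sum_congr rfl fun j _ => integral_finsetSum _ fun k _ => hg j k

end WeightedPairing

lemma sum_filter_lt_add_swap {ι M : Type*} [Fintype ι] [LinearOrder ι] [AddCommGroup M]
    (F : ι → ι → M) :
    ∑ p ∈ Finset.univ.filter (fun p : ι × ι => p.1 < p.2), (F p.2 p.1 + F p.1 p.2)
      = ∑ j, ∑ k, F j k - ∑ j, F j j := by
  have hswap : ∑ p ∈ Finset.univ.filter (fun p : ι × ι => p.1 < p.2), F p.2 p.1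
      = ∑ p ∈ Finset.univ.filter (fun p : ι × ι => p.2 < p.1), F p.1 p.2 :=
    Finset.sum_nbij' Prod.swap Prod.swap (by simp) (by simp) (by simp) (by simp) (by simp)
  have hsplit : ∀ j k, F j k = (if k < j then F j k else 0) + (if j < k then F j k else 0)
      + (if j = k then F j k else 0) := by
    intro j k
    rcases lt_trichotomy j k with h | rfl | h
    · simp [h, h.not_gt, h.ne]
    · simp
    · simp [h, h.not_gt, h.ne']
  rw [Finset.sum_add_distrib, hswap]
  conv_rhs => rw [Finset.sum_congr rfl fun j _ => Finset.sum_congr rfl fun k _ => hsplit j k]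
  simp only [Finset.sum_add_distrib, Finset.sum_ite_eq, Finset.mem_univ, if_true,
    Finset.sum_filter, Fintype.sum_prod_type]
  abel

section PartialDerivatives

variable {n : ℕ} {F : Type} [NormedAddCommGroup F] [NormedSpace ℝ F] {z : Cn n}

lemma pd_eq_zero_of_notMem_tsupport {g : Cn n → F} (hz : z ∉ tsupport g) (l : Fin n × Bool) :
    pd l g z = 0 := by
  simp [pd, fderiv_of_notMem_tsupport ℝ hz]

lemma ContDiffOn.pd {g : Cn n → F} {s : Set (Cn n)} {m k : WithTop ℕ∞}
    (hg : ContDiffOn ℝ k g s) (hs : IsOpen s) (hmk : m + 1 ≤ k) (l : Fin n × Bool) :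
    ContDiffOn ℝ m (pd l g) s :=
  (hg.fderiv_of_isOpen hs hmk).clm_apply contDiffOn_const

lemma ContDiffAt.differentiableAt_pd {g : Cn n → F} (hg : ContDiffAt ℝ 2 g z)
    (l : Fin n × Bool) : DifferentiableAt ℝ (pd l g) z :=
  ((hg.fderiv_right (m := 1) le_rfl).differentiableAt one_ne_zero).clm_apply
    (differentiableAt_const _)

lemma ContDiffAt.pd_pd_comm {g : Cn n → F} (hg : ContDiffAt ℝ 2 g z) (l m : Fin n × Bool) :
    pd l (pd m g) z = pd m (pd l g) z := by
  have hd : DifferentiableAt ℝ (fderiv ℝ g) z :=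
    (hg.fderiv_right (m := 1) le_rfl).differentiableAt one_ne_zero
  have hpd : ∀ l m, pd l (pd m g) z = fderiv ℝ (fderiv ℝ g) z (dir l) (dir m) := fun l m => by
    rw [pd, show pd m g = fun w => fderiv ℝ g w (dir m) from rfl,
      fderiv_clm_apply hd (differentiableAt_const _)]
    simp
  rw [hpd, hpd, hg.isSymmSndFDerivAt (by simp)]

lemma pd_sub {g h : Cn n → F} (hg : DifferentiableAt ℝ g z) (hh : DifferentiableAt ℝ h z)
    (l : Fin n × Bool) : pd l (fun w => g w - h w) z = pd l g z - pd l h z := by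
  simp [pd, fderiv_fun_sub hg hh]

lemma pd_add {g h : Cn n → F} (hg : DifferentiableAt ℝ g z) (hh : DifferentiableAt ℝ h z)
    (l : Fin n × Bool) : pd l (fun w => g w + h w) z = pd l g z + pd l h z := by
  simp [pd, fderiv_fun_add hg hh]

lemma pd_mul {g h : Cn n → ℂ} (hg : DifferentiableAt ℝ g z) (hh : DifferentiableAt ℝ h z)
    (l : Fin n × Bool) : pd l (fun w => g w * h w) z = pd l g z * h z + g z * pd l h z := by
  simp only [pd, fderiv_fun_mul hg hh, add_apply,
    smul_apply, smul_eq_mul]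
  ring

lemma pd_const_mul {g : Cn n → ℂ} (hg : DifferentiableAt ℝ g z) (c : ℂ) (l : Fin n × Bool) :
    pd l (fun w => c * g w) z = c * pd l g z := by
  simp [pd, fderiv_const_mul hg]

lemma pd_conj (g : Cn n → ℂ) (z : Cn n) (l : Fin n × Bool) :
    pd l (fun w => conj (g w)) z = conj (pd l g z) := by
  simp [pd, show (fun w => conj (g w)) = fun w => star (g w) from rfl, fderiv_star]

lemma pd_ofReal {g : Cn n → ℝ} (hg : DifferentiableAt ℝ g z) (l : Fin n × Bool) :
    pd l (fun w => (g w : ℂ)) z = pd l g z := by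
  rw [pd, show (fun w => (g w : ℂ)) = ofRealCLM ∘ g from rfl,
    (ofRealCLM.hasFDerivAt.comp z hg.hasFDerivAt).fderiv]
  simp [pd]

lemma pd_exp_neg {φ : Cn n → ℝ} (hφ : DifferentiableAt ℝ φ z) (l : Fin n × Bool) :
    pd l (fun w => (Real.exp (-φ w) : ℂ)) z = -pd l φ z * Real.exp (-φ z) := by
  have h : HasFDerivAt (fun w => Real.exp (-φ w)) (Real.exp (-φ z) • -fderiv ℝ φ z) z :=
    (Real.hasDerivAt_exp (-φ z)).comp_hasFDerivAt (f := fun w => -φ w) z hφ.hasFDerivAt.neg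
  rw [pd_ofReal h.differentiableAt, pd, h.fderiv, pd]
  simp only [smul_apply, neg_apply, smul_eq_mul]
  push_cast
  ring

end PartialDerivatives

section Wirtinger

variable {n : ℕ} {z : Cn n}

def twistedWz (φ : Cn n → ℝ) (j : Fin n) (u : Cn n → ℂ) (z : Cn n) : ℂ :=
  wz j u z - wzR j φ z * u z

lemma dbarStar_eq_neg_sum_twistedWz (φ : Cn n → ℝ) (f : Fin n → Cn n → ℂ) (z : Cn n) :
    dbarStar φ f z = -∑ j, twistedWz φ j (f j) z :=
  rfl

variable {g h : Cn n → ℂ}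

lemma wz_mul (hg : DifferentiableAt ℝ g z) (hh : DifferentiableAt ℝ h z) (j : Fin n) :
    wz j (fun w => g w * h w) z = wz j g z * h z + g z * wz j h z := by
  simp only [wz, pd_mul hg hh]
  ring

lemma wzbar_mul (hg : DifferentiableAt ℝ g z) (hh : DifferentiableAt ℝ h z) (j : Fin n) :
    wzbar j (fun w => g w * h w) z = wzbar j g z * h z + g z * wzbar j h z := by
  simp only [wzbar, pd_mul hg hh]
  ring

lemma wzbar_sub (hg : DifferentiableAt ℝ g z) (hh : DifferentiableAt ℝ h z) (j : Fin n) :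
    wzbar j (fun w => g w - h w) z = wzbar j g z - wzbar j h z := by
  simp only [wzbar, pd_sub hg hh]
  ring

lemma wz_conj (g : Cn n → ℂ) (z : Cn n) (j : Fin n) :
    wz j (fun w => conj (g w)) z = conj (wzbar j g z) := by
  simp only [wz, wzbar, pd_conj, map_mul, map_add, map_div₀, map_one, map_ofNat, conj_I]
  ring

lemma wzbar_conj (g : Cn n → ℂ) (z : Cn n) (j : Fin n) :
    wzbar j (fun w => conj (g w)) z = conj (wz j g z) := by
  simp only [wz, wzbar, pd_conj, map_mul, map_sub, map_div₀, map_one, map_ofNat, conj_I]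
  ring

lemma wz_exp_neg {φ : Cn n → ℝ} (hφ : DifferentiableAt ℝ φ z) (j : Fin n) :
    wz j (fun w => (Real.exp (-φ w) : ℂ)) z = -wzR j φ z * Real.exp (-φ z) := by
  simp only [wz, wzR, pd_exp_neg hφ]
  ring

lemma wzbar_exp_neg {φ : Cn n → ℝ} (hφ : DifferentiableAt ℝ φ z) (j : Fin n) :
    wzbar j (fun w => (Real.exp (-φ w) : ℂ)) z = -wzbarR j φ z * Real.exp (-φ z) := by
  simp only [wzbar, wzbarR, pd_exp_neg hφ]
  ring

lemma conj_wzR (φ : Cn n → ℝ) (j : Fin n) (z : Cn n) : conj (wzR j φ z) = wzbarR j φ z := by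
  simp only [wzR, wzbarR, map_mul, map_sub, map_div₀, map_one, map_ofNat, conj_I, conj_ofReal]
  ring

lemma conj_wzbar_wzR (φ : Cn n → ℝ) (j k : Fin n) (z : Cn n) :
    conj (wzbar j (wzR k φ) z) = hess φ j k z := by
  have h : wzR k φ = fun w => conj (wzbarR k φ w) := by
    funext w
    rw [← conj_wzR, conj_conj]
  rw [h, wzbar_conj, conj_conj, hess]

lemma ContDiffAt.wzbar_wz_comm (hg : ContDiffAt ℝ 2 g z) (j k : Fin n) :
    wzbar j (wz k g) z = wz k (wzbar j g) z := by
  have hpd := hg.differentiableAt_pd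
  have hwz : wz k g = fun w => 1 / 2 * (pd (k, false) g w + -I * pd (k, true) g w) := by
    funext w
    rw [wz]
    ring
  have hwzbar : wzbar j g = fun w => 1 / 2 * (pd (j, false) g w + I * pd (j, true) g w) := rfl
  rw [wzbar, wz, hwz, hwzbar]
  simp (disch := fun_prop) only [pd_const_mul, pd_add, hg.pd_pd_comm (j, _) (k, _)]
  ring

end Wirtinger

section Regularity

variable {n : ℕ} {s : Set (Cn n)} {m k : WithTop ℕ∞}

lemma ContDiffOn.wz {g : Cn n → ℂ} (hg : ContDiffOn ℝ k g s) (hs : IsOpen s) (hmk : m + 1 ≤ k)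
    (j : Fin n) : ContDiffOn ℝ m (wz j g) s := by
  have := hg.pd hs hmk
  unfold _root_.wz
  fun_prop

lemma ContDiffOn.wzbar {g : Cn n → ℂ} (hg : ContDiffOn ℝ k g s) (hs : IsOpen s)
    (hmk : m + 1 ≤ k) (j : Fin n) : ContDiffOn ℝ m (wzbar j g) s := by
  have := hg.pd hs hmk
  unfold _root_.wzbar
  fun_prop

lemma ContDiffOn.wzR {φ : Cn n → ℝ} (hφ : ContDiffOn ℝ k φ s) (hs : IsOpen s)
    (hmk : m + 1 ≤ k) (j : Fin n) : ContDiffOn ℝ m (wzR j φ) s := by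
  have := hφ.pd hs hmk
  unfold _root_.wzR
  fun_prop

lemma ContDiffOn.wzbarR {φ : Cn n → ℝ} (hφ : ContDiffOn ℝ k φ s) (hs : IsOpen s)
    (hmk : m + 1 ≤ k) (j : Fin n) : ContDiffOn ℝ m (wzbarR j φ) s := by
  have := hφ.pd hs hmk
  unfold _root_.wzbarR
  fun_prop

lemma ContDiffOn.continuousOn_hess {φ : Cn n → ℝ} (hφ : ContDiffOn ℝ 2 φ s) (hs : IsOpen s)
    (j k : Fin n) : ContinuousOn (hess φ j k) s :=
  ((hφ.wzbarR hs (m := 1) le_rfl k).wz hs (m := 0) (by norm_num) j).continuousOn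

lemma ContDiffOn.twistedWz {φ : Cn n → ℝ} {u : Cn n → ℂ} (hφ : ContDiffOn ℝ k φ s)
    (hu : ContDiffOn ℝ k u s) (hs : IsOpen s) (hmk : m + 1 ≤ k) (j : Fin n) :
    ContDiffOn ℝ m (twistedWz φ j u) s := by
  have := hu.wz hs hmk j
  have := hφ.wzR hs hmk j
  have := hu.of_le (le_trans le_self_add hmk)
  unfold _root_.twistedWz
  fun_prop

variable {z : Cn n} {u : Cn n → ℂ}

lemma wz_eq_zero_of_notMem_tsupport (hz : z ∉ tsupport u) (j : Fin n) : wz j u z = 0 := by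
  simp [wz, pd_eq_zero_of_notMem_tsupport hz]

lemma wzbar_eq_zero_of_notMem_tsupport (hz : z ∉ tsupport u) (j : Fin n) : wzbar j u z = 0 := by
  simp [wzbar, pd_eq_zero_of_notMem_tsupport hz]

lemma twistedWz_eq_zero_of_notMem_tsupport (φ : Cn n → ℝ) (hz : z ∉ tsupport u) (j : Fin n) :
    twistedWz φ j u z = 0 := by
  simp [twistedWz, wz_eq_zero_of_notMem_tsupport hz, image_eq_zero_of_notMem_tsupport hz]

end Regularity

section PointwiseIdentity

variable {n : ℕ} {z : Cn n} {φ : Cn n → ℝ} {u v : Cn n → ℂ}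

lemma twistedWz_mul_conj_eq (hφ : ContDiffAt ℝ 2 φ z) (hu : DifferentiableAt ℝ u z)
    (hv : ContDiffAt ℝ 2 v z) (j k : Fin n) :
    twistedWz φ j u z * conj (twistedWz φ k v z) * Real.exp (-φ z)
      = wzbar k u z * conj (wzbar j v z) * Real.exp (-φ z)
        + hess φ j k z * u z * conj (v z) * Real.exp (-φ z)
        + wz j (fun w => u w * Real.exp (-φ w) * conj (twistedWz φ k v w)) z
        - wzbar k (fun w => u w * conj (wzbar j v w) * Real.exp (-φ w)) z := by
  have hφ' : DifferentiableAt ℝ φ z := hφ.differentiableAt two_ne_zero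
  have hv' : DifferentiableAt ℝ v z := hv.differentiableAt two_ne_zero
  have hpv := hv.differentiableAt_pd
  have hpφ := hφ.differentiableAt_pd
  have hwz : DifferentiableAt ℝ (wz k v) z := by unfold wz; fun_prop
  have hwzbar : DifferentiableAt ℝ (wzbar j v) z := by unfold wzbar; fun_prop
  have hwzR : DifferentiableAt ℝ (wzR k φ) z := by unfold wzR; fun_prop
  have hδ : DifferentiableAt ℝ (twistedWz φ k v) z := by unfold twistedWz; fun_prop
  -- In the sum below the second derivatives of `v` cancel because `∂/∂z̄_j` and `∂/∂z_k` commute,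
  -- and those of `φ` assemble into `φ_{jk̄}`.
  rw [wz_mul (by fun_prop) (by fun_prop), wz_mul hu (by fun_prop), wz_exp_neg hφ', wz_conj,
    show twistedWz φ k v = fun w => wz k v w - wzR k φ w * v w from rfl,
    wzbar_sub hwz (by fun_prop), wzbar_mul hwzR hv', hv.wzbar_wz_comm,
    wzbar_mul (by fun_prop) (by fun_prop), wzbar_mul hu (by fun_prop), wzbar_exp_neg hφ',
    wzbar_conj]
  simp only [twistedWz, map_sub, map_add, map_mul, conj_wzbar_wzR, conj_wzR]
  ring

end PointwiseIdentity

section Integration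

variable {n : ℕ} {Ω K : Set (Cn n)} {G : Cn n → ℂ}

lemma integral_pd_eq_zero (hG : ContDiff ℝ 1 G) (hGc : HasCompactSupport G) (l : Fin n × Bool) :
    ∫ z, pd l G z = 0 := by
  have hpd : Integrable (pd l G) :=
    ((hG.continuous_fderiv one_ne_zero).clm_apply continuous_const).integrable_of_hasCompactSupport
      ((hGc.fderiv ℝ).comp_left (g := fun L : Cn n →L[ℝ] ℂ => L (dir l)) rfl)
  simpa [pd] using integral_mul_fderiv_eq_neg_fderiv_mul_of_integrable
    (f := fun _ => (1 : ℂ)) (g := G) (v := dir l) (by simp) (by simp only [one_mul]; exact hpd)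
    (by simp only [one_mul]; exact hG.continuous.integrable_of_hasCompactSupport hGc)
    (fun _ _ => differentiableAt_const _) (fun x _ => hG.differentiable one_ne_zero x)

lemma integrableOn_pd (hΩ : IsOpen Ω) (hG : ContDiffOn ℝ 1 G Ω) (hK : IsCompact K) (hKΩ : K ⊆ Ω)
    (hG0 : ∀ z ∉ K, G z = 0) (l : Fin n × Bool) : IntegrableOn (pd l G) Ω :=
  have hGK := tsupport_subset_of_eq_zero_off hK.isClosed hG0
  (hG.pd hΩ (m := 0) (by norm_num) l).continuousOn.integrableOn_of_eq_zero_off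
    hΩ.measurableSet hK hKΩ fun _ hz => pd_eq_zero_of_notMem_tsupport (fun h => hz (hGK h)) l

lemma setIntegral_pd_eq_zero (hΩ : IsOpen Ω) (hG : ContDiffOn ℝ 1 G Ω) (hK : IsCompact K)
    (hKΩ : K ⊆ Ω) (hG0 : ∀ z ∉ K, G z = 0) (l : Fin n × Bool) :
    ∫ z in Ω, pd l G z = 0 := by
  have hGK := tsupport_subset_of_eq_zero_off hK.isClosed hG0
  rw [setIntegral_eq_integral_of_forall_compl_eq_zero
    fun z hz => pd_eq_zero_of_notMem_tsupport (fun h => hz (hKΩ (hGK h))) l]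
  exact integral_pd_eq_zero (hG.contDiff_of_tsupport_subset hΩ (hGK.trans hKΩ))
    (hK.of_isClosed_subset (isClosed_tsupport G) hGK) l

lemma integrableOn_wz (hΩ : IsOpen Ω) (hG : ContDiffOn ℝ 1 G Ω) (hK : IsCompact K) (hKΩ : K ⊆ Ω)
    (hG0 : ∀ z ∉ K, G z = 0) (j : Fin n) : IntegrableOn (wz j G) Ω :=
  have hint := integrableOn_pd hΩ hG hK hKΩ hG0
  ((hint _).sub' ((hint _).const_mul _)).const_mul _

lemma integrableOn_wzbar (hΩ : IsOpen Ω) (hG : ContDiffOn ℝ 1 G Ω) (hK : IsCompact K)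
    (hKΩ : K ⊆ Ω) (hG0 : ∀ z ∉ K, G z = 0) (j : Fin n) : IntegrableOn (wzbar j G) Ω :=
  have hint := integrableOn_pd hΩ hG hK hKΩ hG0
  ((hint _).fun_add ((hint _).const_mul _)).const_mul _

lemma setIntegral_wz_eq_zero (hΩ : IsOpen Ω) (hG : ContDiffOn ℝ 1 G Ω) (hK : IsCompact K)
    (hKΩ : K ⊆ Ω) (hG0 : ∀ z ∉ K, G z = 0) (j : Fin n) :
    ∫ z in Ω, wz j G z = 0 := by
  have hint := integrableOn_pd hΩ hG hK hKΩ hG0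
  simp only [wz]
  rw [integral_const_mul, integral_sub (hint _) ((hint _).const_mul _), integral_const_mul,
    setIntegral_pd_eq_zero hΩ hG hK hKΩ hG0, setIntegral_pd_eq_zero hΩ hG hK hKΩ hG0]
  simp

lemma setIntegral_wzbar_eq_zero (hΩ : IsOpen Ω) (hG : ContDiffOn ℝ 1 G Ω) (hK : IsCompact K)
    (hKΩ : K ⊆ Ω) (hG0 : ∀ z ∉ K, G z = 0) (j : Fin n) :
    ∫ z in Ω, wzbar j G z = 0 := by
  have hint := integrableOn_pd hΩ hG hK hKΩ hG0
  simp only [wzbar]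
  rw [integral_const_mul, integral_add (hint _) ((hint _).const_mul _), integral_const_mul,
    setIntegral_pd_eq_zero hΩ hG hK hKΩ hG0, setIntegral_pd_eq_zero hΩ hG hK hKΩ hG0]
  simp

end Integration

section KohnMorrey

variable {n : ℕ} {Ω : Set (Cn n)} {φ : Cn n → ℝ} {u v : Cn n → ℂ}

lemma integrableOn_mul_conj_mul_exp {K : Set (Cn n)} {g h : Cn n → ℂ} (hΩ : MeasurableSet Ω)
    (hφ : ContinuousOn φ Ω) (hg : ContinuousOn g Ω) (hh : ContinuousOn h Ω) (hK : IsCompact K)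
    (hKΩ : K ⊆ Ω) (hg0 : ∀ z ∉ K, g z = 0) :
    IntegrableOn (fun z => g z * conj (h z) * Real.exp (-φ z)) Ω :=
  ContinuousOn.integrableOn_of_eq_zero_off (by fun_prop) hΩ hK hKΩ fun z hz => by simp [hg0 z hz]

lemma integrableOn_wzbar_mul_conj_wzbar (hΩ : IsOpen Ω) (hφ : ContinuousOn φ Ω)
    (hu : SmoothCompSupp Ω u) (hv : ContDiffOn ℝ 1 v Ω) (j k : Fin n) :
    IntegrableOn (fun z => wzbar j u z * conj (wzbar k v z) * Real.exp (-φ z)) Ω :=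
  integrableOn_mul_conj_mul_exp hΩ.measurableSet hφ
    (hu.1.contDiffOn.wzbar hΩ (m := 0) (by norm_cast) j).continuousOn
    (hv.wzbar hΩ (m := 0) (by norm_num) k).continuousOn hu.2.1 hu.2.2
    fun _ hz => wzbar_eq_zero_of_notMem_tsupport hz j

lemma integrableOn_twistedWz_mul_conj_twistedWz (hΩ : IsOpen Ω) (hφ : ContDiffOn ℝ 1 φ Ω)
    (hu : SmoothCompSupp Ω u) (hv : ContDiffOn ℝ 1 v Ω) (j k : Fin n) :
    IntegrableOn (fun z => twistedWz φ j u z * conj (twistedWz φ k v z) * Real.exp (-φ z)) Ω :=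
  integrableOn_mul_conj_mul_exp hΩ.measurableSet hφ.continuousOn
    (hφ.twistedWz (hu.1.contDiffOn.of_le (by norm_cast)) hΩ (m := 0) (by norm_num) j).continuousOn
    (hφ.twistedWz hv hΩ (m := 0) (by norm_num) k).continuousOn hu.2.1 hu.2.2
    fun _ hz => twistedWz_eq_zero_of_notMem_tsupport φ hz j

lemma setIntegral_twistedWz_mul_conj (hΩ : IsOpen Ω) (hφ : ContDiffOn ℝ 2 φ Ω)
    (hu : SmoothCompSupp Ω u) (hv : ContDiffOn ℝ 2 v Ω) (j k : Fin n) :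
    ∫ z in Ω, twistedWz φ j u z * conj (twistedWz φ k v z) * Real.exp (-φ z)
      = (∫ z in Ω, wzbar k u z * conj (wzbar j v z) * Real.exp (-φ z))
        + ∫ z in Ω, hess φ j k z * u z * conj (v z) * Real.exp (-φ z) := by
  have hu2 : ContDiffOn ℝ 2 u Ω := hu.1.contDiffOn.of_le (by norm_cast)
  have hG : ContDiffOn ℝ 1 (fun w => u w * Real.exp (-φ w) * conj (twistedWz φ k v w)) Ω := by
    have := hφ.twistedWz hv hΩ (m := 1) (by norm_num) k
    have := hφ.of_le one_le_two
    have := hu2.of_le one_le_two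
    fun_prop
  have hH : ContDiffOn ℝ 1 (fun w => u w * conj (wzbar j v w) * Real.exp (-φ w)) Ω := by
    have := hv.wzbar hΩ (m := 1) (by norm_num) j
    have := hφ.of_le one_le_two
    have := hu2.of_le one_le_two
    fun_prop
  have hG0 : ∀ z ∉ tsupport u, u z * Real.exp (-φ z) * conj (twistedWz φ k v z) = 0 :=
    fun z hz => by simp [image_eq_zero_of_notMem_tsupport hz]
  have hH0 : ∀ z ∉ tsupport u, u z * conj (wzbar j v z) * Real.exp (-φ z) = 0 :=
    fun z hz => by simp [image_eq_zero_of_notMem_tsupport hz]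
  have iA := integrableOn_wzbar_mul_conj_wzbar hΩ hφ.continuousOn hu (hv.of_le one_le_two) k j
  have iB := integrableOn_mul_conj_mul_exp (g := fun z => hess φ j k z * u z)
    hΩ.measurableSet hφ.continuousOn
    ((hφ.continuousOn_hess hΩ j k).mul hu2.continuousOn) hv.continuousOn hu.2.1 hu.2.2
    fun z hz => by simp [image_eq_zero_of_notMem_tsupport hz]
  have iC := integrableOn_wz hΩ hG hu.2.1 hu.2.2 hG0 j
  have iD := integrableOn_wzbar hΩ hH hu.2.1 hu.2.2 hH0 k
  rw [setIntegral_congr_fun hΩ.measurableSet fun z hz => twistedWz_mul_conj_eq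
      (hφ.contDiffAt (hΩ.mem_nhds hz)) (hu.1.differentiable (by simp) z)
      (hv.contDiffAt (hΩ.mem_nhds hz)) j k,
    integral_sub ((iA.fun_add iB).fun_add iC) iD, integral_add (iA.fun_add iB) iC,
    integral_add iA iB, setIntegral_wz_eq_zero hΩ hG hu.2.1 hu.2.2 hG0,
    setIntegral_wzbar_eq_zero hΩ hH hu.2.1 hu.2.2 hH0, add_zero, sub_zero]

end KohnMorrey

/-- Kohn–Morrey formula for compactly supported `(0,1)`-forms:
`Σ_{j,k} ∫ φ_{jk̄} f_j f̄_k e^{−φ} + Σ_{j,k} ∫ |∂f_j/∂z̄_k|² e^{−φ} = ‖∂̄f‖²_φ + ‖∂̄*_φ f‖²_φ`. -/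
theorem stmt7 {n : ℕ} (Ω : Set (Cn n)) (hΩ : IsOpen Ω)
    (φ : Cn n → ℝ) (hφ : ContDiffOn ℝ 2 φ Ω)
    (f : Fin n → Cn n → ℂ) (hf : ∀ j, SmoothCompSupp Ω (f j)) :
    (∑ j : Fin n, ∑ k : Fin n,
        ∫ z in Ω, hess φ j k z * f j z * (starRingEnd ℂ) (f k z) * (Real.exp (-φ z) : ℂ))
      + Complex.ofReal (∑ j : Fin n, ∑ k : Fin n,
          ∫ z in Ω, ‖wzbar k (f j) z‖^2 * Real.exp (-φ z))
    = Complex.ofReal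
        ((∑ p ∈ Finset.univ.filter (fun p : Fin n × Fin n => p.1 < p.2),
            ∫ z in Ω, ‖wzbar p.1 (f p.2) z - wzbar p.2 (f p.1) z‖^2 * Real.exp (-φ z))
          + ∫ z in Ω, ‖dbarStar φ f z‖^2 * Real.exp (-φ z)) := by
  have hf1 : ∀ j, ContDiffOn ℝ 1 (f j) Ω := fun j => (hf j).1.contDiffOn.of_le (by norm_cast)
  have hf2 : ∀ j, ContDiffOn ℝ 2 (f j) Ω := fun j => (hf j).1.contDiffOn.of_le (by norm_cast)
  have hA j j' k k' := integrableOn_wzbar_mul_conj_wzbar hΩ hφ.continuousOn (hf j) (hf1 j') k k'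
  have hexpand : ∀ j k, ∫ z in Ω, (wzbar k (f j) z - wzbar j (f k) z)
      * conj (wzbar k (f j) z - wzbar j (f k) z) * Real.exp (-φ z) = _ := fun j k =>
    integral_sub_mul_conj_sub (hA j j k k) (hA j k k j) (hA k k j j) (hA k j j k)
  simp only [Complex.ofReal_add, Complex.ofReal_sum, ofReal_integral_norm_sq_mul,
    dbarStar_eq_neg_sum_twistedWz, map_neg, neg_mul_neg, hexpand]
  rw [integral_sum_mul_conj_sum fun j k => integrableOn_twistedWz_mul_conj_twistedWz hΩ
    (hφ.of_le one_le_two) (hf j) (hf1 k) j k]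
  simp only [setIntegral_twistedWz_mul_conj hΩ hφ (hf _) (hf2 _)]
  rw [sum_filter_lt_add_swap fun j k =>
    (∫ z in Ω, wzbar k (f j) z * conj (wzbar k (f j) z) * Real.exp (-φ z))
      - ∫ z in Ω, wzbar k (f j) z * conj (wzbar j (f k) z) * Real.exp (-φ z)]
  simp only [sub_self, Finset.sum_const_zero, sub_zero, Finset.sum_sub_distrib,
    Finset.sum_add_distrib]
  abel
end
end
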